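/- arXiv:2404.11458 — 5 statements merged into one kernel-verified Lean document; each statement's English description precedes it below -/
import Mathlib

section
/- For every natural number n, the number of feasible tours equals (2n)! / 2^n; equivalently, 2^n times the cardinality of the set {σ : Equiv.Perm (Fin (2*n)) | σ is a feasible tour} equals (2*n)!. -/
/-- A visiting sequence `σ` (where `σ k` is the node visited at position `k`) is a
feasible tour if every pickup node `i` (i.e. `(i : ℕ) < n`) is visited before its
paired delivery node `i + n`. -/
def IsFeasibleTour (n : ℕ) (σ : Equiv.Perm (Fin (2 * n))) : Prop :=
  ∀ i : Fin (2 * n), ∀ _h : (i : ℕ) < n,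
    σ⁻¹ i < σ⁻¹ (⟨(i : ℕ) + n, by omega⟩ : Fin (2 * n))

namespace PDTSPAux

def pk (n : ℕ) (i : Fin n) : Fin (2 * n) := ⟨i, by omega⟩
def dl (n : ℕ) (i : Fin n) : Fin (2 * n) := ⟨(i : ℕ) + n, by omega⟩

def gfun (n : ℕ) (b : Fin n → Bool) (k : Fin (2 * n)) : Fin (2 * n) :=
  if h : (k : ℕ) < n then
    (if b ⟨k, h⟩ then ⟨(k : ℕ) + n, by omega⟩ else k)
  else
    (if b ⟨(k : ℕ) - n, by have := k.isLt; omega⟩ then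
      ⟨(k : ℕ) - n, by have := k.isLt; omega⟩ else k)

lemma gfun_pk (n : ℕ) (b : Fin n → Bool) (i : Fin n) :
    gfun n b (pk n i) = if b i then dl n i else pk n i := by
  have hi := i.isLt
  simp only [gfun, pk, dl]
  exact dif_pos hi

lemma gfun_dl (n : ℕ) (b : Fin n → Bool) (i : Fin n) :
    gfun n b (dl n i) = if b i then pk n i else dl n i := by
  have hi := i.isLt
  simp only [gfun, pk, dl]
  refine (dif_neg (show ¬ ((i : ℕ) + n < n) by omega)).trans ?_
  have h2 : (⟨(i : ℕ) + n - n, by omega⟩ : Fin n) = i := by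
    apply Fin.ext
    simp
  simp only [h2]
  by_cases hb : b i
  · rw [if_pos hb, if_pos hb]
    apply Fin.ext
    simp
  · rw [if_neg hb, if_neg hb]

lemma pk_or_dl (n : ℕ) (k : Fin (2 * n)) : (∃ i, k = pk n i) ∨ ∃ i, k = dl n i := by
  have hk := k.isLt
  by_cases h : (k : ℕ) < n
  · exact Or.inl ⟨⟨k, h⟩, by apply Fin.ext; simp [pk]⟩
  · exact Or.inr ⟨⟨(k : ℕ) - n, by omega⟩, by apply Fin.ext; simp [dl]; omega⟩

lemma gfun_invol (n : ℕ) (b : Fin n → Bool) : Function.Involutive (gfun n b) := by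
  intro k
  rcases pk_or_dl n k with ⟨i, rfl⟩ | ⟨i, rfl⟩ <;> by_cases hb : b i <;>
    simp [gfun_pk, gfun_dl, hb]

def ebp (n : ℕ) (b : Fin n → Bool) : Equiv.Perm (Fin (2 * n)) :=
  (gfun_invol n b).toPerm

lemma ebp_pk (n : ℕ) (b : Fin n → Bool) (i : Fin n) :
    ebp n b (pk n i) = if b i then dl n i else pk n i := gfun_pk n b i

lemma ebp_dl (n : ℕ) (b : Fin n → Bool) (i : Fin n) :
    ebp n b (dl n i) = if b i then pk n i else dl n i := gfun_dl n b i

lemma ebp_inv (n : ℕ) (b : Fin n → Bool) : (ebp n b)⁻¹ = ebp n b := rfl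

lemma ebp_mul_self (n : ℕ) (b : Fin n → Bool) : ebp n b * ebp n b = 1 := by
  apply Equiv.ext; intro x
  exact gfun_invol n b x

def B (n : ℕ) (π : Equiv.Perm (Fin (2 * n))) (i : Fin n) : Bool :=
  decide (π⁻¹ (dl n i) < π⁻¹ (pk n i))

lemma pk_ne_dl (n : ℕ) (i : Fin n) : pk n i ≠ dl n i := by
  have := i.isLt
  simp [pk, dl, Fin.ext_iff]; omega

lemma inv_comp (n : ℕ) (b : Fin n → Bool) (π : Equiv.Perm (Fin (2 * n)))
    (x : Fin (2 * n)) : (ebp n b * π)⁻¹ x = π⁻¹ (ebp n b x) := by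
  simp [mul_inv_rev, ebp_inv, Equiv.Perm.mul_apply]

lemma feasible_comp (n : ℕ) (π : Equiv.Perm (Fin (2 * n))) :
    IsFeasibleTour n (ebp n (B n π) * π) := by
  intro i hi
  obtain ⟨j, rfl⟩ : ∃ j : Fin n, i = pk n j := ⟨⟨i, hi⟩, Fin.ext (by simp [pk])⟩
  have hdl : (⟨((pk n j : Fin (2*n)) : ℕ) + n, by omega⟩ : Fin (2 * n)) = dl n j := by
    apply Fin.ext; simp [pk, dl]
  rw [hdl, inv_comp, inv_comp, ebp_pk, ebp_dl]
  by_cases hb : B n π j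
  · rw [if_pos hb, if_pos hb]
    exact of_decide_eq_true hb
  · rw [if_neg hb, if_neg hb]
    have hle : ¬ π⁻¹ (dl n j) < π⁻¹ (pk n j) := by simpa [B] using hb
    have hne : π⁻¹ (pk n j) ≠ π⁻¹ (dl n j) := by simp [pk_ne_dl n j]
    exact lt_of_le_of_ne (not_lt.mp hle) hne

lemma B_comp (n : ℕ) (b : Fin n → Bool) (σ : Equiv.Perm (Fin (2 * n)))
    (hσ : IsFeasibleTour n σ) : B n (ebp n b * σ) = b := by
  funext i
  have hfeas : σ⁻¹ (pk n i) < σ⁻¹ (dl n i) := by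
    have h := hσ (pk n i) (by simpa [pk] using i.isLt)
    have hdl : (⟨((pk n i : Fin (2*n)) : ℕ) + n, by have := i.isLt; simp [pk]; omega⟩ : Fin (2 * n)) = dl n i := by
      apply Fin.ext; simp [pk, dl]
    rwa [hdl] at h
  simp only [B, inv_comp, ebp_pk, ebp_dl]
  by_cases hb : b i
  · simp [hb, hfeas]; exact hfeas
  · simp [hb, not_lt.mpr (le_of_lt hfeas)]; exact le_of_lt hfeas

def tourEquiv (n : ℕ) :
    ((Fin n → Bool) × {σ : Equiv.Perm (Fin (2 * n)) // IsFeasibleTour n σ}) ≃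
      Equiv.Perm (Fin (2 * n)) where
  toFun p := ebp n p.1 * p.2.1
  invFun π := ⟨B n π, ⟨ebp n (B n π) * π, feasible_comp n π⟩⟩
  left_inv p := by
    obtain ⟨b, σ, hσ⟩ := p
    have hB := B_comp n b σ hσ
    simp only [hB]
    refine Prod.ext rfl ?_
    simp [← mul_assoc, ebp_mul_self]
  right_inv π := by
    have hB := B_comp n (B n π) (ebp n (B n π) * π) (feasible_comp n π)
    simp only [hB, ← mul_assoc, ebp_mul_self, one_mul]

theorem main (n : ℕ) :
    2 ^ n * Nat.card {σ : Equiv.Perm (Fin (2 * n)) // IsFeasibleTour n σ} =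
      Nat.factorial (2 * n) := by
  have h := Nat.card_congr (tourEquiv n)
  rw [Nat.card_prod] at h
  simp only [Nat.card_eq_fintype_card, Fintype.card_fun, Fintype.card_bool,
    Fintype.card_perm, Fintype.card_fin] at h
  simpa using h

end PDTSPAux

/-- The number of feasible tours is `(2n)! / 2^n`; equivalently `2^n` times the
number of feasible tours equals `(2n)!`. -/
theorem card_feasible_tours (n : ℕ) :
    2 ^ n * Nat.card {σ : Equiv.Perm (Fin (2 * n)) // IsFeasibleTour n σ} =
      Nat.factorial (2 * n) := by
  exact PDTSPAux.main n
end

section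
/- For every permutation τ : Equiv.Perm (Fin n) prescribing a relative order of the pickup nodes, the number of feasible tours σ : Equiv.Perm (Fin (2*n)) in which the pickup nodes occur in the order τ 0, τ 1, …, τ (n−1) (i.e. σ⁻¹ (τ j) < σ⁻¹ (τ k), with τ j and τ k viewed as pickup nodes in Fin (2*n), whenever j < k in Fin n) equals (2*n)! / (2^n * n!); equivalently, 2^n * n! times the cardinality of this set of feasible tours equals (2*n)!. -/
/-- View an index `i : Fin n` as the pickup node with value `i` in `Fin (2 * n)`. -/
def pickupNode (n : ℕ) (i : Fin n) : Fin (2 * n) :=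
  ⟨(i : ℕ), by have := i.isLt; omega⟩

namespace PDTSPaux

open Equiv

/-- The equivalence `Bool ≃ Bool` given by xor with a constant. -/
def xorE (c : Bool) : Bool ≃ Bool where
  toFun d := xor d c
  invFun d := xor d c
  left_inv d := by cases c <;> cases d <;> rfl
  right_inv d := by cases c <;> cases d <;> rfl

/-- Encode a pair index together with a pickup/delivery flag as a node of `Fin (2*n)`. -/
def pairE (n : ℕ) : Fin n × Bool ≃ Fin (2 * n) where
  toFun x := ⟨(x.1 : ℕ) + cond x.2 n 0, by have := x.1.isLt; cases x.2 <;> simp <;> omega⟩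
  invFun y :=
    if h : (y : ℕ) < n then (⟨(y : ℕ), h⟩, false)
    else (⟨(y : ℕ) - n, by have := y.isLt; omega⟩, true)
  left_inv := by
    rintro ⟨i, (_ | _)⟩ <;> have hi := i.isLt
    · simp only [cond_false]
      rw [dif_pos (by omega)]
      simp [Fin.ext_iff]
    · simp only [cond_true]
      rw [dif_neg (by omega)]
      simp [Fin.ext_iff]
  right_inv := by
    intro y
    have hy := y.isLt
    by_cases h : (y : ℕ) < n <;> simp [h, Fin.ext_iff] <;> omega

lemma pairE_false {n : ℕ} (p : Fin n) :
    pairE n (p, false) = (⟨(p : ℕ), by have := p.isLt; omega⟩ : Fin (2 * n)) := by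
  apply Fin.ext; simp [pairE]

lemma pairE_true {n : ℕ} (p : Fin n) :
    pairE n (p, true) = (⟨(p : ℕ) + n, by have := p.isLt; omega⟩ : Fin (2 * n)) := by
  apply Fin.ext; simp [pairE]

lemma pickupNode_eq {n : ℕ} (p : Fin n) : pickupNode n p = pairE n (p, false) := by
  rw [pairE_false]; rfl

/-- The hyperoctahedral relabeling permutation: pair `i` goes to pair `ρ i`, and the
pickup/delivery flags within pair `i` are flipped iff `b i`. -/
def gPerm (n : ℕ) (b : Fin n → Bool) (ρ : Equiv.Perm (Fin n)) : Equiv.Perm (Fin (2 * n)) :=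
  ((pairE n).symm.trans (Equiv.prodShear ρ fun i => xorE (b i))).trans (pairE n)

lemma gPerm_apply {n : ℕ} (b : Fin n → Bool) (ρ : Equiv.Perm (Fin n)) (i : Fin n) (d : Bool) :
    gPerm n b ρ (pairE n (i, d)) = pairE n (ρ i, xor d (b i)) := by
  simp [gPerm, xorE]

lemma gPerm_inv_apply {n : ℕ} (b : Fin n → Bool) (ρ : Equiv.Perm (Fin n)) (i : Fin n) (d : Bool) :
    (gPerm n b ρ)⁻¹ (pairE n (ρ i, d)) = pairE n (i, xor d (b i)) := by
  have : pairE n (ρ i, d) = gPerm n b ρ (pairE n (i, xor d (b i))) := by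
    rw [gPerm_apply]
    congr 1
    cases d <;> cases b i <;> rfl
  rw [this]
  simp

lemma pos_formula {n : ℕ} (b : Fin n → Bool) (ρ : Equiv.Perm (Fin n))
    (σ₀ : Equiv.Perm (Fin (2 * n))) (i : Fin n) (d : Bool) :
    (gPerm n b ρ * σ₀)⁻¹ (pairE n (ρ i, d)) = σ₀⁻¹ (pairE n (i, xor d (b i))) := by
  rw [mul_inv_rev, Equiv.Perm.mul_apply, gPerm_inv_apply]

/-- The position of the first-visited node of pair `p` under visiting sequence `σ`. -/
def firstPos {n : ℕ} (σ : Equiv.Perm (Fin (2 * n))) (p : Fin n) : Fin (2 * n) :=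
  min (σ⁻¹ (pairE n (p, false))) (σ⁻¹ (pairE n (p, true)))

lemma firstPos_injective {n : ℕ} (σ : Equiv.Perm (Fin (2 * n))) :
    Function.Injective (firstPos σ) := by
  intro p q h
  unfold firstPos at h
  rcases min_cases (σ⁻¹ (pairE n (p, false))) (σ⁻¹ (pairE n (p, true))) with ⟨h1, _⟩ | ⟨h1, _⟩ <;>
  rcases min_cases (σ⁻¹ (pairE n (q, false))) (σ⁻¹ (pairE n (q, true))) with ⟨h2, _⟩ | ⟨h2, _⟩ <;>
  · rw [h1, h2] at h
    have := (pairE n).injective ((σ⁻¹ : Equiv.Perm (Fin (2 * n))).injective h)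
    exact (Prod.ext_iff.mp this).1

lemma perm_unique_strictMono {n : ℕ} {α : Type*} [LinearOrder α] {f : Fin n → α}
    (hf : Function.Injective f) {u v : Equiv.Perm (Fin n)}
    (hu : StrictMono (f ∘ u)) (hv : StrictMono (f ∘ v)) : u = v := by
  have hr : Set.range (f ∘ u) = Set.range (f ∘ v) := by
    rw [Set.range_comp, Set.range_comp, u.surjective.range_eq, v.surjective.range_eq]
  have hfu : f ∘ ⇑u = f ∘ ⇑v :=
    (@StrictMono.range_inj (Fin n) α _ _ (inferInstance : WellFoundedLT (Fin n)) _ _ hu hv).mp hr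
  apply Equiv.ext
  intro x
  exact hf (congrFun hfu x)

lemma facts {n : ℕ} (b : Fin n → Bool) (ρ : Equiv.Perm (Fin n))
    (σ₀ : Equiv.Perm (Fin (2 * n)))
    (hfeas : ∀ p : Fin n, σ₀⁻¹ (pairE n (p, false)) < σ₀⁻¹ (pairE n (p, true))) :
    (∀ p : Fin n, firstPos (gPerm n b ρ * σ₀) (ρ p) = σ₀⁻¹ (pairE n (p, false))) ∧
    (∀ p : Fin n, b p = decide ((gPerm n b ρ * σ₀)⁻¹ (pairE n (ρ p, true)) <
      (gPerm n b ρ * σ₀)⁻¹ (pairE n (ρ p, false)))) := by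
  constructor
  · intro p
    unfold firstPos
    rw [pos_formula, pos_formula]
    cases hb : b p
    · simp only [hb, Bool.xor_false, Bool.xor_true, Bool.false_xor, Bool.true_xor,
        Bool.not_false, Bool.not_true]
      exact min_eq_left (hfeas p).le
    · simp only [hb, Bool.xor_false, Bool.xor_true, Bool.false_xor, Bool.true_xor,
        Bool.not_false, Bool.not_true]
      exact min_eq_right (hfeas p).le
  · intro p
    rw [pos_formula, pos_formula]
    cases hb : b p
    · simp only [hb, Bool.xor_false, Bool.xor_true, Bool.false_xor, Bool.true_xor,
        Bool.not_false, Bool.not_true]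
      symm
      rw [decide_eq_false_iff_not]
      exact not_lt.mpr (hfeas p).le
    · simp only [hb, Bool.xor_false, Bool.xor_true, Bool.false_xor, Bool.true_xor,
        Bool.not_false, Bool.not_true]
      symm
      rw [decide_eq_true_iff]
      exact hfeas p

lemma mem_iff {n : ℕ} (τ : Equiv.Perm (Fin n)) (σ : Equiv.Perm (Fin (2 * n))) :
    (IsFeasibleTour n σ ∧ ∀ j k : Fin n, j < k →
        σ⁻¹ (pickupNode n (τ j)) < σ⁻¹ (pickupNode n (τ k))) ↔
    ((∀ p : Fin n, σ⁻¹ (pairE n (p, false)) < σ⁻¹ (pairE n (p, true))) ∧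
      ∀ j k : Fin n, j < k →
        σ⁻¹ (pairE n (τ j, false)) < σ⁻¹ (pairE n (τ k, false))) := by
  constructor
  · rintro ⟨h1, h2⟩
    refine ⟨fun p => ?_, fun j k hjk => ?_⟩
    · have hp := p.isLt
      have := h1 (pairE n (p, false)) (by rw [pairE_false]; exact hp)
      convert this using 2; apply Fin.ext; simp [pairE]
    · have := h2 j k hjk
      rwa [pickupNode_eq, pickupNode_eq] at this
  · rintro ⟨h1, h2⟩
    refine ⟨fun i hi => ?_, fun j k hjk => ?_⟩
    · have := h1 ⟨(i : ℕ), hi⟩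
      rw [pairE_false, pairE_true] at this
      convert this using 2
    · rw [pickupNode_eq, pickupNode_eq]
      exact h2 j k hjk

lemma key_bijective (n : ℕ) (τ : Equiv.Perm (Fin n)) :
    Function.Bijective (fun x : (Fin n → Bool) × Equiv.Perm (Fin n) ×
        {σ : Equiv.Perm (Fin (2 * n)) //
          IsFeasibleTour n σ ∧
          ∀ j k : Fin n, j < k →
            σ⁻¹ (pickupNode n (τ j)) < σ⁻¹ (pickupNode n (τ k))} =>
      gPerm n x.1 x.2.1 * (x.2.2 : Equiv.Perm (Fin (2 * n)))) := by
  constructor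
  · rintro ⟨b, ρ, σ₀, hσ₀⟩ ⟨b', ρ', σ₀', hσ₀'⟩ hxy
    simp only at hxy
    obtain ⟨hfeas, hord⟩ := (mem_iff τ σ₀).mp hσ₀
    obtain ⟨hfeas', hord'⟩ := (mem_iff τ σ₀').mp hσ₀'
    obtain ⟨hfp, hb⟩ := facts b ρ σ₀ hfeas
    obtain ⟨hfp', hb'⟩ := facts b' ρ' σ₀' hfeas'
    -- uniqueness of the sorting permutation
    have hmono : StrictMono (firstPos (gPerm n b ρ * σ₀) ∘ (ρ * τ : Equiv.Perm (Fin n))) := by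
      intro j k hjk
      simp only [Function.comp_apply, Equiv.Perm.mul_apply, hfp]
      exact hord j k hjk
    have hmono' : StrictMono (firstPos (gPerm n b ρ * σ₀) ∘ (ρ' * τ : Equiv.Perm (Fin n))) := by
      intro j k hjk
      simp only [Function.comp_apply, Equiv.Perm.mul_apply, hxy, hfp']
      exact hord' j k hjk
    have hρ : ρ = ρ' := by
      have := perm_unique_strictMono (firstPos_injective (gPerm n b ρ * σ₀)) hmono hmono'
      exact mul_right_cancel this
    have hbb : b = b' := by
      funext p
      rw [hb p, hb' p, ← hxy, ← hρ]
    have hσ : σ₀ = σ₀' := by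
      rw [hbb, hρ] at hxy
      exact mul_left_cancel hxy
    subst hρ; subst hbb
    simp only [Prod.mk.injEq, true_and]
    exact Subtype.ext hσ
  · intro σ
    classical
    set u : Equiv.Perm (Fin n) := Tuple.sort (firstPos σ) with hu_def
    have hu : StrictMono (firstPos σ ∘ u) :=
      (Tuple.monotone_sort (firstPos σ)).strictMono_of_injective
        ((firstPos_injective σ).comp u.injective)
    set ρ : Equiv.Perm (Fin n) := u * τ⁻¹ with hρ_def
    set b : Fin n → Bool :=
      fun i => decide (σ⁻¹ (pairE n (ρ i, true)) < σ⁻¹ (pairE n (ρ i, false))) with hb_def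
    set σ₀ : Equiv.Perm (Fin (2 * n)) := (gPerm n b ρ)⁻¹ * σ with hσ₀_def
    have hpos : ∀ (i : Fin n) (d : Bool),
        σ₀⁻¹ (pairE n (i, d)) = σ⁻¹ (pairE n (ρ i, xor d (b i))) := by
      intro i d
      rw [hσ₀_def, mul_inv_rev, inv_inv, Equiv.Perm.mul_apply, gPerm_apply]
    have hne : ∀ p : Fin n, σ⁻¹ (pairE n (ρ p, false)) ≠ σ⁻¹ (pairE n (ρ p, true)) := by
      intro p h
      have := (pairE n).injective ((σ⁻¹ : Equiv.Perm (Fin (2 * n))).injective h)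
      simp at this
    have hfeas : ∀ p : Fin n, σ₀⁻¹ (pairE n (p, false)) < σ₀⁻¹ (pairE n (p, true)) := by
      intro p
      rw [hpos, hpos]
      by_cases hlt : σ⁻¹ (pairE n (ρ p, true)) < σ⁻¹ (pairE n (ρ p, false))
      · have hbp : b p = true := by rw [hb_def]; exact decide_eq_true hlt
        rw [hbp]
        simpa using hlt
      · have hbp : b p = false := by rw [hb_def]; exact decide_eq_false hlt
        rw [hbp]
        simpa using lt_of_le_of_ne (not_lt.mp hlt) (hne p)
    have hfirst : ∀ p : Fin n, σ₀⁻¹ (pairE n (p, false)) = firstPos σ (ρ p) := by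
      intro p
      rw [hpos]
      unfold firstPos
      by_cases hlt : σ⁻¹ (pairE n (ρ p, true)) < σ⁻¹ (pairE n (ρ p, false))
      · have hbp : b p = true := by rw [hb_def]; exact decide_eq_true hlt
        rw [hbp]
        simpa using (min_eq_right hlt.le).symm
      · have hbp : b p = false := by rw [hb_def]; exact decide_eq_false hlt
        rw [hbp]
        simpa using (min_eq_left (not_lt.mp hlt)).symm
    have hord : ∀ j k : Fin n, j < k →
        σ₀⁻¹ (pairE n (τ j, false)) < σ₀⁻¹ (pairE n (τ k, false)) := by
      intro j k hjk
      rw [hfirst, hfirst]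
      have hρτ : ∀ j : Fin n, ρ (τ j) = u j := by
        intro j
        rw [hρ_def]
        simp [Equiv.Perm.mul_apply]
      rw [hρτ, hρτ]
      exact hu hjk
    refine ⟨⟨b, ρ, ⟨σ₀, (mem_iff τ σ₀).mpr ⟨hfeas, hord⟩⟩⟩, ?_⟩
    simp only [hσ₀_def]
    group

end PDTSPaux

/-- For every prescribed relative order `τ` of the pickup nodes, the number of
feasible tours whose pickup nodes occur in the order `τ 0, τ 1, …, τ (n-1)` equals
`(2n)!/(2^n * n!)`; equivalently `2^n * n!` times this number equals `(2n)!`. -/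
theorem card_feasible_tours_fixed_pickup_order (n : ℕ) (τ : Equiv.Perm (Fin n)) :
    2 ^ n * Nat.factorial n *
      Nat.card {σ : Equiv.Perm (Fin (2 * n)) //
        IsFeasibleTour n σ ∧
        ∀ j k : Fin n, j < k →
          σ⁻¹ (pickupNode n (τ j)) < σ⁻¹ (pickupNode n (τ k))} =
      Nat.factorial (2 * n) := by
  classical
  have hcard := Nat.card_congr (Equiv.ofBijective _ (PDTSPaux.key_bijective n τ))
  rw [Nat.card_prod, Nat.card_prod] at hcard
  rw [Nat.card_eq_fintype_card (α := Fin n → Bool), Nat.card_eq_fintype_card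
    (α := Equiv.Perm (Fin n)), Nat.card_eq_fintype_card (α := Equiv.Perm (Fin (2 * n)))] at hcard
  rw [Fintype.card_fun, Fintype.card_bool, Fintype.card_fin, Fintype.card_perm,
    Fintype.card_perm, Fintype.card_fin, Fintype.card_fin] at hcard
  rw [mul_assoc]
  exact hcard
end

section
/- Let σ be a feasible tour and let p ≤ q be positions in Fin (2*n). If σ r is a pickup node for every position r with p ≤ r ≤ q, or σ r is a delivery node for every position r with p ≤ r ≤ q, then the visiting sequence (Equiv.swap p q).trans σ — obtained from σ by exchanging the nodes visited at positions p and q — is a feasible tour. -/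
/-- IntraBlock node exchange: if all nodes visited at positions between `p` and `q`
are pickup nodes, or all of them are delivery nodes, then swapping the nodes
visited at positions `p` and `q` maps a feasible tour to a feasible tour. -/
theorem intraBlock_node_exchange_feasible (n : ℕ) (σ : Equiv.Perm (Fin (2 * n)))
    (hσ : IsFeasibleTour n σ) (p q : Fin (2 * n)) (hpq : p ≤ q)
    (hblock : (∀ r : Fin (2 * n), p ≤ r → r ≤ q → ((σ r : ℕ) < n)) ∨
              (∀ r : Fin (2 * n), p ≤ r → r ≤ q → n ≤ (σ r : ℕ))) :
    IsFeasibleTour n ((Equiv.swap p q).trans σ) := by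
  intro i hi
  have h1 := hσ i hi
  set a := σ⁻¹ i with ha
  set b := σ⁻¹ (⟨(i : ℕ) + n, by omega⟩ : Fin (2 * n)) with hb
  have hσa : (σ a : ℕ) < n := by rw [ha, Equiv.Perm.inv_def, Equiv.apply_symm_apply]; exact hi
  have hσb : n ≤ (σ b : ℕ) := by rw [hb, Equiv.Perm.inv_def, Equiv.apply_symm_apply]; simp
  have hτ : ∀ x, ((Equiv.swap p q).trans σ)⁻¹ x = Equiv.swap p q (σ⁻¹ x) := by
    intro x
    simp [Equiv.Perm.inv_def, Equiv.symm_trans_apply, Equiv.symm_swap]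
  rw [hτ, hτ]
  show Equiv.swap p q a < Equiv.swap p q b
  have hab : a < b := h1
  rcases hblock with hbl | hbl
  · -- all in [p,q] are pickups; so b ∉ [p,q]
    have hbout : ¬(p ≤ b ∧ b ≤ q) := by
      rintro ⟨h2, h3⟩
      exact absurd (hbl b h2 h3) (by omega)
    have hbp : b ≠ p := fun h => hbout ⟨le_of_eq h.symm, h ▸ hpq⟩
    have hbq : b ≠ q := fun h => hbout ⟨h ▸ hpq, le_of_eq h⟩
    rw [Equiv.swap_apply_of_ne_of_ne hbp hbq]
    by_cases hain : p ≤ a ∧ a ≤ q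
    · -- b outside; since a < b and p ≤ a, must have q < b
      have hqb : q < b := by
        rcases lt_or_ge q b with h | h
        · exact h
        · exact absurd ⟨le_trans hain.1 (le_of_lt hab), h⟩ hbout
      rw [Equiv.swap_apply_def]
      split_ifs with h h
      · exact hqb
      · exact lt_of_le_of_lt hpq hqb
      · exact hab
    · have hap : a ≠ p := fun h => hain ⟨le_of_eq h.symm, h ▸ hpq⟩
      have haq : a ≠ q := by
        intro h
        exact hain ⟨h ▸ hpq, le_of_eq h⟩
      rw [Equiv.swap_apply_of_ne_of_ne hap haq]
      exact hab
  · -- all in [p,q] are deliveries; so a ∉ [p,q]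
    have haout : ¬(p ≤ a ∧ a ≤ q) := by
      rintro ⟨h2, h3⟩
      exact absurd (hbl a h2 h3) (by omega)
    have hap : a ≠ p := fun h => haout ⟨le_of_eq h.symm, h ▸ hpq⟩
    have haq : a ≠ q := fun h => haout ⟨h ▸ hpq, le_of_eq h⟩
    rw [Equiv.swap_apply_of_ne_of_ne hap haq]
    by_cases hbin : p ≤ b ∧ b ≤ q
    · have hapl : a < p := by
        rcases lt_or_ge a p with h | h
        · exact h
        · exact absurd ⟨h, le_trans (le_of_lt hab) hbin.2⟩ haout
      rw [Equiv.swap_apply_def]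
      split_ifs with h h
      · exact lt_of_lt_of_le hapl hpq
      · exact hapl
      · exact hab
    · have hbp : b ≠ p := fun h => hbin ⟨le_of_eq h.symm, h ▸ hpq⟩
      have hbq : b ≠ q := fun h => hbin ⟨h ▸ hpq, le_of_eq h⟩
      rw [Equiv.swap_apply_of_ne_of_ne hbp hbq]
      exact hab
end

section
/- Let σ be a feasible tour and let p < q be positions in Fin (2*n) such that σ p is a delivery node and σ q is a pickup node. Then the visiting sequence (Equiv.swap p q).trans σ — obtained from σ by exchanging the nodes visited at positions p and q — is a feasible tour. -/
theorem Equiv.swap_apply_lt_swap_apply {α : Type*} [LinearOrder α] {p q a b : α}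
    (hpq : p < q) (hab : a < b) (ha : a ≠ p) (hb : b ≠ q) :
    swap p q a < swap p q b := by
  rcases eq_or_ne a q with rfl | haq
  · rw [swap_apply_right, swap_apply_of_ne_of_ne (hpq.trans hab).ne' hb]
    exact hpq.trans hab
  rcases eq_or_ne b p with rfl | hbp
  · rw [swap_apply_left, swap_apply_of_ne_of_ne ha haq]
    exact hab.trans hpq
  · rwa [swap_apply_of_ne_of_ne ha haq, swap_apply_of_ne_of_ne hbp hb]

/-- InterBlock node exchange: if `p < q`, the node visited at position `p` is a
delivery node and the node visited at position `q` is a pickup node, then swapping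
the nodes visited at positions `p` and `q` maps a feasible tour to a feasible
tour. -/
theorem interBlock_node_exchange_feasible (n : ℕ) (σ : Equiv.Perm (Fin (2 * n)))
    (hσ : IsFeasibleTour n σ) (p q : Fin (2 * n)) (hpq : p < q)
    (hp : n ≤ (σ p : ℕ)) (hq : (σ q : ℕ) < n) :
    IsFeasibleTour n ((Equiv.swap p q).trans σ) := by
  intro i hi
  have hpickup : σ⁻¹ i ≠ p := by
    rw [Ne, Equiv.Perm.inv_eq_iff_eq, Fin.ext_iff]
    omega
  have hdelivery : σ⁻¹ ⟨i + n, by omega⟩ ≠ q := by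
    rw [Ne, Equiv.Perm.inv_eq_iff_eq, Fin.ext_iff, Fin.val_mk]
    omega
  -- `((swap p q).trans σ)⁻¹ j` is `swap p q (σ⁻¹ j)` by definition.
  exact Equiv.swap_apply_lt_swap_apply hpq (hσ i hi) hpickup hdelivery
end

section
/- Let σ be a feasible tour and let i, j be pickup nodes (elements of Fin (2*n) with value < n). Then the visiting sequence obtained from σ by exchanging the positions of pickup nodes i and j and simultaneously exchanging the positions of the paired delivery nodes i + n and j + n — i.e. the permutation σ.trans ((Equiv.swap i j).trans (Equiv.swap (i + n) (j + n))), which relabels σ's output by swapping i with j and i + n with j + n — is a feasible tour. -/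
/-!
Relabelling the nodes of a tour by a permutation `π` keeps it feasible as soon as `π⁻¹` maps
pickup nodes to pickup nodes and commutes with the pairing `k ↦ k + n`. On node values, the
inverse of the exchange acts as `swap i j ∘ swap (i + n) (j + n)`; the first swap moves only
pickup values and the second is the first one shifted by `n`, so it has both properties.
-/

open Equiv

theorem IsFeasibleTour.trans {n : ℕ} {σ : Perm (Fin (2 * n))} (hσ : IsFeasibleTour n σ)
    (π : Perm (Fin (2 * n))) (hpickup : ∀ k : Fin (2 * n), (k : ℕ) < n → (π.symm k : ℕ) < n)
    (hpair : ∀ k : Fin (2 * n), ∀ hk : (k : ℕ) < n,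
      (π.symm ⟨(k : ℕ) + n, by omega⟩ : ℕ) = π.symm k + n) :
    IsFeasibleTour n (σ.trans π) := by
  intro k hk
  have hdelivery : π.symm ⟨k + n, by omega⟩ = ⟨π.symm k + n, by have := hpickup k hk; omega⟩ :=
    Fin.ext (hpair k hk)
  change σ⁻¹ (π.symm k) < σ⁻¹ (π.symm ⟨k + n, by omega⟩)
  rw [hdelivery]
  exact hσ (π.symm k) (hpickup k hk)

theorem Fin.val_swap_apply {m : ℕ} (a b c : Fin m) :
    (swap a b c : ℕ) = swap (a : ℕ) b c :=
  (Fin.val_injective.swap_apply a b c).symm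

theorem Equiv.swap_apply_lt {α : Type*} [DecidableEq α] [Preorder α] {n a b c : α}
    (ha : a < n) (hb : b < n) (hc : c < n) :
    swap a b c < n :=
  (swap_bijOn_self (s := Set.Iio n) (iff_of_true ha hb)).mapsTo hc

theorem Equiv.swap_add_right_apply {M : Type*} [DecidableEq M] [Add M] [IsRightCancelAdd M]
    (n a b c : M) : swap (a + n) (b + n) (c + n) = swap a b c + n :=
  (add_left_injective n).swap_apply a b c

/-- Node pair exchange: exchanging the positions of two pickup nodes `i` and `j`
and simultaneously exchanging the positions of their paired delivery nodes
`i + n` and `j + n` maps a feasible tour to a feasible tour. -/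
theorem node_pair_exchange_feasible (n : ℕ) (σ : Equiv.Perm (Fin (2 * n)))
    (hσ : IsFeasibleTour n σ) (i j : Fin (2 * n))
    (hi : (i : ℕ) < n) (hj : (j : ℕ) < n) :
    IsFeasibleTour n
      (σ.trans ((Equiv.swap i j).trans
        (Equiv.swap (⟨(i : ℕ) + n, by omega⟩ : Fin (2 * n))
          (⟨(j : ℕ) + n, by omega⟩ : Fin (2 * n))))) := by
  set π := (swap i j).trans
    (swap (⟨(i : ℕ) + n, by omega⟩ : Fin (2 * n)) ⟨(j : ℕ) + n, by omega⟩)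
  have hval : ∀ x, (π.symm x : ℕ) = swap (i : ℕ) j (swap ((i : ℕ) + n) (j + n) x) := fun x => by
    simp only [π, symm_trans_apply, symm_swap, Fin.val_swap_apply]
  have hpickup_fixed : ∀ k : ℕ, k < n → swap ((i : ℕ) + n) (j + n) k = k :=
    fun k hk => swap_apply_of_ne_of_ne (by omega) (by omega)
  refine hσ.trans _ (fun k hk => ?_) (fun k hk => ?_)
  · rw [hval, hpickup_fixed k hk]
    exact swap_apply_lt hi hj hk
  · have hlt : swap (i : ℕ) j k < n := swap_apply_lt hi hj hk
    have hdelivery_fixed : swap (i : ℕ) j (swap (i : ℕ) j k + n) = swap (i : ℕ) j k + n :=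
      swap_apply_of_ne_of_ne (by omega) (by omega)
    rw [hval, hval, Fin.val_mk, swap_add_right_apply, hpickup_fixed k hk, hdelivery_fixed]
end
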